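/- arXiv:1912.07042 — 3 statements merged into one kernel-verified Lean document; each statement's English description precedes it below -/
import Mathlib

section
/- Succinctness of reconfigurable semantics, upper bound: for every n ≥ 1, there exists a reconfigurable execution of the broadcast protocol P_n covering {☺} whose size is exactly 3 (i.e., which uses only 3 nodes). -/
/-- A broadcast protocol over finite state set `Q` and finite message alphabet `M`.
`I` is the set of initial states, `br q m q'` means `(q, !!m, q') ∈ Δ` (a broadcast
transition) and `rcv q m q'` means `(q, ??m, q') ∈ Δ` (a reception transition).
The protocol is complete for receptions. -/
structure BroadcastProtocol (Q M : Type) [Fintype Q] [DecidableEq Q] [Fintype M] where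
  I : Finset Q
  br : Q → M → Q → Prop
  rcv : Q → M → Q → Prop
  complete : ∀ q m, ∃ q', rcv q m q'

section Execs
variable {Q M : Type} [Fintype Q] [DecidableEq Q] [Fintype M]

/-- A reconfigurable execution of length `r` over the finite node type `ν`:
`lab i v` is the state of node `v` in the `i`-th configuration, `edges i` is the
(symmetric, irreflexive) communication topology of the `i`-th configuration,
and in the `i`-th step node `sender i` broadcasts message `msg i` to its
neighbours; the topology may change arbitrarily at each step. -/
structure RExec (P : BroadcastProtocol Q M) (ν : Type) [Fintype ν] [DecidableEq ν]
    (r : ℕ) where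
  lab : Fin (r + 1) → ν → Q
  edges : Fin (r + 1) → ν → ν → Prop
  edges_symm : ∀ i, Symmetric (edges i)
  edges_irrefl : ∀ i, Irreflexive (edges i)
  sender : Fin r → ν
  msg : Fin r → M
  init : ∀ v, lab 0 v ∈ P.I
  step_br : ∀ i : Fin r, P.br (lab i.castSucc (sender i)) (msg i) (lab i.succ (sender i))
  step_rcv : ∀ i : Fin r, ∀ v, v ≠ sender i →
    (edges i.castSucc (sender i) v → P.rcv (lab i.castSucc v) (msg i) (lab i.succ v)) ∧
    (¬ edges i.castSucc (sender i) v → lab i.succ v = lab i.castSucc v)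

namespace RExec

variable {P : BroadcastProtocol Q M} {ν : Type} [Fintype ν] [DecidableEq ν] {r : ℕ}

/-- Labelling of the last configuration. -/
def lastLab (ρ : RExec P ν r) : ν → Q := ρ.lab (Fin.last r)

/-- The execution covers `F` if a node of the last configuration is labelled in `F`. -/
def Covers (ρ : RExec P ν r) (F : Set Q) : Prop := ∃ v, ρ.lastLab v ∈ F

/-- The active length of node `v`: the number of steps in which `v` broadcasts. -/
def activeLen (ρ : RExec P ν r) (v : ν) : ℕ :=
  (Finset.univ.filter fun i : Fin r => ρ.sender i = v).card

end RExec

end Execs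
/- ## The protocol P_n (succinctness) -/

abbrev PnQ (n : ℕ) := Fin (2 * n + 1) ⊕ (Fin n ⊕ Unit)
abbrev PnM (n : ℕ) := Option (Fin n)

def PnBr (n : ℕ) : PnQ n → PnM n → PnQ n → Prop
  | .inl k, none, q' => (k : ℕ) = 0 ∧ q' = .inl k
  | .inl k, some i, q' =>
      (k : ℕ) = 2 * (i : ℕ) + 1 ∧ ∃ h : (k : ℕ) + 1 < 2 * n + 1, q' = .inl ⟨(k : ℕ) + 1, h⟩
  | _, _, _ => False

def PnRcv (n : ℕ) : PnQ n → PnM n → PnQ n → Prop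
  | .inl k, none, q' =>
      ((k : ℕ) % 2 = 0 ∧ ∃ _h : (k : ℕ) < 2 * n, q' = Sum.inl ⟨(k : ℕ) + 1, by omega⟩)
      ∨ (¬ ((k : ℕ) % 2 = 0 ∧ (k : ℕ) < 2 * n) ∧ q' = .inl k)
  | .inl k, some i, q' =>
      ((k : ℕ) = 0 ∧ q' = .inr (.inr ()))
      ∨ ((k : ℕ) = 0 ∧ (i : ℕ) = 0 ∧ q' = .inr (.inl ⟨0, Fin.pos i⟩))
      ∨ ((k : ℕ) ≠ 0 ∧ q' = .inl k)
  | .inr (.inl j), none, q' => q' = .inr (.inl j)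
  | .inr (.inl j), some i, q' =>
      ((i : ℕ) = (j : ℕ) + 1 ∧ ∃ h : (j : ℕ) + 1 < n, q' = .inr (.inl ⟨(j : ℕ) + 1, h⟩))
      ∨ ((i : ℕ) ≠ (j : ℕ) + 1 ∧ q' = .inr (.inl j))
  | .inr (.inr _), _, q' => q' = .inr (.inr ())

def PnProt (n : ℕ) : BroadcastProtocol (PnQ n) (PnM n) where
  I := {Sum.inl (0 : Fin (2 * n + 1))}
  br := PnBr n
  rcv := PnRcv n
  complete := by
    rintro (k | j | u) (_ | i)
    · by_cases h : (k : ℕ) % 2 = 0 ∧ (k : ℕ) < 2 * n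
      · exact ⟨Sum.inl ⟨(k : ℕ) + 1, by omega⟩, Or.inl ⟨h.1, h.2, rfl⟩⟩
      · exact ⟨Sum.inl k, Or.inr ⟨h, rfl⟩⟩
    · by_cases h : (k : ℕ) = 0
      · exact ⟨Sum.inr (Sum.inr ()), Or.inl ⟨h, rfl⟩⟩
      · exact ⟨Sum.inl k, Or.inr (Or.inr ⟨h, rfl⟩)⟩
    · exact ⟨Sum.inr (Sum.inl j), rfl⟩
    · by_cases h : (i : ℕ) = (j : ℕ) + 1
      · exact ⟨Sum.inr (Sum.inl ⟨(j : ℕ) + 1, by have := i.isLt; omega⟩),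
          Or.inl ⟨h, by have := i.isLt; omega, rfl⟩⟩
      · exact ⟨Sum.inr (Sum.inl j), Or.inr ⟨h, rfl⟩⟩
    · exact ⟨Sum.inr (Sum.inr ()), rfl⟩
    · exact ⟨Sum.inr (Sum.inr ()), rfl⟩

def PnSmiley (n : ℕ) (hn : 1 ≤ n) : PnQ n := Sum.inr (Sum.inl ⟨n - 1, by omega⟩)

/-! Node 0 stays in `q_0` and keeps broadcasting `a`; node 1 climbs `q_0 → q_1 → ⋯ → q_{2n}` by
alternately receiving `a` from node 0 and broadcasting `b_1, …, b_n`; node 2 hears only the `b_i`,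
in order, and so walks `q_0 → r_1 → ⋯ → r_n = ☺`. Reconfiguration is what makes this possible:
before each step the sender is connected to its successor alone, so node 2 never receives `a`
and node 0 never receives any `b_i`. -/

namespace RExec

variable {Q M : Type} [Fintype Q] [DecidableEq Q] [Fintype M]
  {P : BroadcastProtocol Q M} {ν : Type} [Fintype ν] [DecidableEq ν] {r : ℕ}

/-- The topology of step `i` is the star joining `sender i` to `receivers i`. -/
theorem exists_lab_eq_of_broadcasts (lab : Fin (r + 1) → ν → Q) (sender : Fin r → ν) (msg : Fin r → M)
    (receivers : Fin r → Set ν) (init : ∀ v, lab 0 v ∈ P.I)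
    (step_br : ∀ i, P.br (lab i.castSucc (sender i)) (msg i) (lab i.succ (sender i)))
    (step_rcv : ∀ i, ∀ v ≠ sender i, v ∈ receivers i →
      P.rcv (lab i.castSucc v) (msg i) (lab i.succ v))
    (step_idle : ∀ i, ∀ v ≠ sender i, v ∉ receivers i → lab i.succ v = lab i.castSucc v) :
    ∃ ρ : RExec P ν r, ρ.lab = lab := by
  let topology : Fin (r + 1) → SimpleGraph ν := Fin.snoc (α := fun _ => SimpleGraph ν)
    (fun i => SimpleGraph.fromRel fun u v => u = sender i ∧ v ∈ receivers i) ⊥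
  have adj_sender (i : Fin r) (v : ν) (hv : v ≠ sender i) :
      (topology i.castSucc).Adj (sender i) v ↔ v ∈ receivers i := by
    simp [topology, Fin.snoc_castSucc, hv, hv.symm]
  refine ⟨{ lab, sender, msg, init, step_br
            edges := fun i => (topology i).Adj
            edges_symm := fun _ _ _ => SimpleGraph.Adj.symm
            edges_irrefl := fun _ _ => SimpleGraph.irrefl _
            step_rcv := fun i v hv => ?_ }, rfl⟩
  rw [adj_sender i v hv]
  exact ⟨step_rcv i v hv, step_idle i v hv⟩

end RExec

namespace PnProt

variable {n : ℕ}

theorem br_a : (PnProt n).br (.inl 0) none (.inl 0) := ⟨rfl, rfl⟩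

theorem rcv_a {k k' : Fin (2 * n + 1)} (hk : k.val % 2 = 0) (hk' : k'.val = k.val + 1) :
    (PnProt n).rcv (.inl k) none (.inl k') :=
  Or.inl ⟨hk, by omega, by simp [Fin.ext_iff, hk']⟩

theorem br_b {k k' : Fin (2 * n + 1)} {i : Fin n} (hk : k.val = 2 * i.val + 1)
    (hk' : k'.val = k.val + 1) : (PnProt n).br (.inl k) (some i) (.inl k') :=
  ⟨hk, by omega, by simp [Fin.ext_iff, hk']⟩

theorem rcv_b_first {i : Fin n} (hi : i.val = 0) :
    (PnProt n).rcv (.inl 0) (some i) (.inr (.inl i)) :=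
  Or.inr (Or.inl ⟨rfl, hi, by simp [Fin.ext_iff, hi]⟩)

theorem rcv_b_next {j i : Fin n} (hi : i.val = j.val + 1) :
    (PnProt n).rcv (.inr (.inl j)) (some i) (.inr (.inl i)) :=
  Or.inl ⟨hi, by omega, by simp [Fin.ext_iff, hi]⟩

/-- `tracker m` is the state `r_m` of the paper, with `r_0 = q_0`. -/
def tracker (m : Fin (n + 1)) : PnQ n := Fin.cases (.inl 0) (fun j => .inr (.inl j)) m

theorem rcv_tracker (j : Fin n) :
    (PnProt n).rcv (tracker j.castSucc) (some j) (tracker j.succ) := by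
  obtain ⟨n, rfl⟩ : ∃ m, n = m + 1 := ⟨n - 1, by have := j.pos; omega⟩
  cases j using Fin.cases with
  | zero => exact rcv_b_first rfl
  | succ k => simpa [tracker, ← Fin.succ_castSucc] using rcv_b_next (j := k.castSucc) rfl

theorem tracker_last (hn : 1 ≤ n) : tracker (Fin.last n) = PnSmiley n hn := by
  obtain ⟨m, rfl⟩ : ∃ m, n = m + 1 := ⟨n - 1, by omega⟩
  rfl

def threeNodeLab (t : Fin (2 * n + 1)) : Fin 3 → PnQ n :=
  ![.inl 0, .inl t, tracker ⟨t / 2, by omega⟩]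

def threeNodeSender (t : Fin (2 * n)) : Fin 3 := if t.val % 2 = 0 then 0 else 1

def threeNodeMsg (t : Fin (2 * n)) : PnM n :=
  if t.val % 2 = 0 then none else some ⟨t / 2, by omega⟩

def threeNodeReceivers (t : Fin (2 * n)) : Set (Fin 3) := {threeNodeSender t + 1}

theorem threeNodeLab_zero (v : Fin 3) : threeNodeLab 0 v ∈ (PnProt n).I := by
  fin_cases v <;> simp [threeNodeLab, tracker, PnProt]

theorem br_threeNodeSender (t : Fin (2 * n)) :
    (PnProt n).br (threeNodeLab t.castSucc (threeNodeSender t)) (threeNodeMsg t)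
      (threeNodeLab t.succ (threeNodeSender t)) := by
  by_cases ht : t.val % 2 = 0
  · simpa [threeNodeLab, threeNodeSender, threeNodeMsg, ht] using br_a
  · simp only [threeNodeLab, threeNodeSender, threeNodeMsg, ht]
    exact br_b (by simp only [Fin.val_castSucc]; omega) (by simp)

theorem rcv_threeNodeReceivers (t : Fin (2 * n)) (v : Fin 3) (hv : v ∈ threeNodeReceivers t) :
    (PnProt n).rcv (threeNodeLab t.castSucc v) (threeNodeMsg t) (threeNodeLab t.succ v) := by
  by_cases ht : t.val % 2 = 0
  · obtain rfl : v = 1 := by simpa [threeNodeReceivers, threeNodeSender, ht] using hv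
    simp only [threeNodeLab, threeNodeMsg, ht, ↓reduceIte, Matrix.cons_val_one,
      Matrix.cons_val_zero]
    exact rcv_a (by simpa) (by simp)
  · obtain rfl : v = 2 := by simpa [threeNodeReceivers, threeNodeSender, ht] using hv
    simp only [threeNodeLab, threeNodeMsg, ht, ↓reduceIte, Matrix.cons_val]
    convert rcv_tracker (n := n) ⟨t / 2, by omega⟩ using 2
    · rfl
    · ext
      simp only [Fin.val_succ]
      omega

theorem threeNodeLab_idle (t : Fin (2 * n)) (v : Fin 3) (hs : v ≠ threeNodeSender t)
    (hv : v ∉ threeNodeReceivers t) : threeNodeLab t.succ v = threeNodeLab t.castSucc v := by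
  by_cases ht : t.val % 2 = 0
  · obtain rfl : v = 2 := by fin_cases v <;> simp_all [threeNodeReceivers, threeNodeSender]
    simp only [threeNodeLab, Matrix.cons_val_two, Matrix.tail_cons, Matrix.head_cons]
    congr 2
    simp only [Fin.val_succ, Fin.val_castSucc]
    omega
  · obtain rfl : v = 0 := by fin_cases v <;> simp_all [threeNodeReceivers, threeNodeSender]
    rfl

theorem exists_rexec_lab_eq_threeNodeLab : ∃ ρ : RExec (PnProt n) (Fin 3) (2 * n), ρ.lab = threeNodeLab :=
  RExec.exists_lab_eq_of_broadcasts _ _ _ _ threeNodeLab_zero br_threeNodeSender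
    (fun t v _ => rcv_threeNodeReceivers t v) threeNodeLab_idle

end PnProt

/-- **Succinctness of reconfigurable semantics, upper bound.** For every `n ≥ 1`
there is a reconfigurable execution of `P_n` covering `{☺}` with exactly 3 nodes. -/
theorem succinct_reconfigurable_three_nodes (n : ℕ) (hn : 1 ≤ n) :
    ∃ (r : ℕ) (ρ : RExec (PnProt n) (Fin 3) r), ρ.Covers {PnSmiley n hn} := by
  obtain ⟨ρ, hρ⟩ := PnProt.exists_rexec_lab_eq_threeNodeLab (n := n)
  refine ⟨2 * n, ρ, 2, ?_⟩
  have last_half : (⟨(Fin.last (2 * n) : ℕ) / 2, by omega⟩ : Fin (n + 1)) = Fin.last n :=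
    Fin.ext (by simp)
  simp only [RExec.lastLab, hρ, PnProt.threeNodeLab, Matrix.cons_val_two, Matrix.tail_cons,
    Matrix.head_cons, last_half, PnProt.tracker_last hn, Set.mem_singleton_iff]
end

section
/- Succinctness of reconfigurable semantics, lower bound for lossy executions: for every n ≥ 1, every lossy execution of the broadcast protocol P_n covering {☺} has at least n + 1 nodes. -/
section Execs
variable {Q M : Type} [Fintype Q] [DecidableEq Q] [Fintype M]

/-- A lossy execution of length `r` over the finite node type `ν`: the communication
topology `E` is fixed throughout, and in the `i`-th step node `sender i` broadcasts
message `msg i`, which is lost (reaching no node) iff `lost i = true`. -/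
structure LExec (P : BroadcastProtocol Q M) (ν : Type) [Fintype ν] [DecidableEq ν]
    (r : ℕ) where
  lab : Fin (r + 1) → ν → Q
  E : ν → ν → Prop
  E_symm : Symmetric E
  E_irrefl : Irreflexive E
  sender : Fin r → ν
  msg : Fin r → M
  lost : Fin r → Bool
  init : ∀ v, lab 0 v ∈ P.I
  step_br : ∀ i : Fin r, P.br (lab i.castSucc (sender i)) (msg i) (lab i.succ (sender i))
  step_lost : ∀ i : Fin r, lost i = true → ∀ v, v ≠ sender i →
    lab i.succ v = lab i.castSucc v
  step_real : ∀ i : Fin r, lost i = false → ∀ v, v ≠ sender i →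
    (E (sender i) v → P.rcv (lab i.castSucc v) (msg i) (lab i.succ v)) ∧
    (¬ E (sender i) v → lab i.succ v = lab i.castSucc v)

namespace LExec

variable {P : BroadcastProtocol Q M} {ν : Type} [Fintype ν] [DecidableEq ν] {r : ℕ}

/-- Labelling of the last configuration. -/
def lastLab (ρ : LExec P ν r) : ν → Q := ρ.lab (Fin.last r)

/-- The execution covers `F` if a node of the last configuration is labelled in `F`. -/
def Covers (ρ : LExec P ν r) (F : Set Q) : Prop := ∃ v, ρ.lastLab v ∈ F

/-- The active length of node `v`: the number of broadcasts (lost or not) of `v`. -/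
def activeLen (ρ : LExec P ν r) (v : ν) : ℕ :=
  (Finset.univ.filter fun i : Fin r => ρ.sender i = v).card

/-- The real active length of node `v`: the number of non-lost broadcasts of `v`. -/
def realActiveLen (ρ : LExec P ν r) (v : ν) : ℕ :=
  (Finset.univ.filter fun i : Fin r => ρ.sender i = v ∧ ρ.lost i = false).card

end LExec

end Execs
/-! The node that ends in `☺ = r_n` has received `b_1, …, b_n`, each in a non-lost broadcast
by a neighbour, so it has `n` neighbours that broadcast a `b`; they are pairwise distinct.
Indeed a node broadcasts `b_i` from `q_{2i-1}` and lands in `q_{2i}`; before it can broadcast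
`b_k`, `k > i`, it must receive `a` from a neighbour in `q_0`. Since `q_0` is never re-entered,
that neighbour was in `q_0` already when `b_i` was broadcast, and receiving `b_i` took it out
of `q_0`. -/

theorem Fin.exists_step_of_not {r : ℕ} {p : Fin (r + 1) → Prop} {T T' : Fin (r + 1)}
    (hle : T ≤ T') (hT : p T) (hT' : ¬ p T') :
    ∃ t : Fin r, T ≤ t.castSucc ∧ p t.castSucc ∧ ¬ p t.succ := by
  by_contra! H
  refine hT' (Fin.induction (motive := fun t => T ≤ t → p t) ?_ ?_ T' hle)
  · intro h0
    rwa [← le_antisymm h0 (Fin.zero_le T)]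
  · intro t ih ht
    rcases eq_or_lt_of_le ht with rfl | hlt
    · exact hT
    · have ht' : T ≤ t.castSucc := Fin.le_castSucc_iff.mpr hlt
      exact H t ht' (ih ht')

namespace LExec

variable {Q M : Type} [Fintype Q] [DecidableEq Q] [Fintype M]
variable {P : BroadcastProtocol Q M} {ν : Type} [Fintype ν] [DecidableEq ν] {r : ℕ}
variable (ρ : LExec P ν r)

theorem ne_of_adj {u v : ν} (h : ρ.E u v) : u ≠ v := by
  rintro rfl
  exact ρ.E_irrefl u h

theorem rcv_of_adj {i : Fin r} {v : ν} (hl : ρ.lost i = false) (hE : ρ.E (ρ.sender i) v) :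
    P.rcv (ρ.lab i.castSucc v) (ρ.msg i) (ρ.lab i.succ v) :=
  (ρ.step_real i hl v (ρ.ne_of_adj hE).symm).1 hE

theorem step_cases (i : Fin r) (v : ν) :
    ρ.lab i.succ v = ρ.lab i.castSucc v ∨
      (v = ρ.sender i ∧ P.br (ρ.lab i.castSucc v) (ρ.msg i) (ρ.lab i.succ v)) ∨
      (ρ.lost i = false ∧ ρ.E (ρ.sender i) v ∧
        P.rcv (ρ.lab i.castSucc v) (ρ.msg i) (ρ.lab i.succ v)) := by
  by_cases hv : v = ρ.sender i
  · subst hv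
    exact Or.inr (Or.inl ⟨rfl, ρ.step_br i⟩)
  cases hl : ρ.lost i
  · by_cases hE : ρ.E (ρ.sender i) v
    · exact Or.inr (Or.inr ⟨rfl, hE, ρ.rcv_of_adj hl hE⟩)
    · exact Or.inl ((ρ.step_real i hl v hv).2 hE)
  · exact Or.inl (ρ.step_lost i hl v hv)

theorem monotone_comp_lab {α : Type*} [Preorder α] (f : Q → α)
    (hbr : ∀ q m q', P.br q m q' → f q ≤ f q')
    (hrcv : ∀ q m q', P.rcv q m q' → f q ≤ f q') (v : ν) : Monotone fun t => f (ρ.lab t v) := by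
  refine Fin.monotone_iff_le_succ.mpr fun i => ?_
  rcases ρ.step_cases i v with heq | ⟨-, hb⟩ | ⟨-, -, hr⟩
  · exact heq ▸ le_rfl
  · exact hbr _ _ _ hb
  · exact hrcv _ _ _ hr

theorem exists_step_of_not (p : Q → Prop) {T T' : Fin (r + 1)} {v : ν} (hle : T ≤ T')
    (hT : p (ρ.lab T v)) (hT' : ¬ p (ρ.lab T' v)) :
    ∃ t : Fin r, T ≤ t.castSucc ∧ p (ρ.lab t.castSucc v) ∧ ¬ p (ρ.lab t.succ v) ∧
      (P.br (ρ.lab t.castSucc v) (ρ.msg t) (ρ.lab t.succ v) ∨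
        ρ.lost t = false ∧ ρ.E (ρ.sender t) v ∧
          P.rcv (ρ.lab t.castSucc v) (ρ.msg t) (ρ.lab t.succ v)) := by
  obtain ⟨t, hTt, hp, hp'⟩ :=
    Fin.exists_step_of_not (p := fun t => p (ρ.lab t v)) hle hT hT'
  rcases ρ.step_cases t v with heq | ⟨-, hb⟩ | hr
  · exact absurd (heq ▸ hp) hp'
  · exact ⟨t, hTt, hp, hp', Or.inl hb⟩
  · exact ⟨t, hTt, hp, hp', Or.inr hr⟩

end LExec

namespace PnQ

variable {n : ℕ}

/-- `⊥` and the `r_i` get an even rank above all `q_k`, so that no transition decreases the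
rank and only a reception of `a` turns an even rank odd. -/
def rank : PnQ n → ℕ
  | .inl k => k
  | .inr _ => 2 * n + 2

/-- `r_i` (stored as `inr (inl (i - 1))`) has level `i`; all other states have level `0`. -/
def level : PnQ n → ℕ
  | .inr (.inl j) => j + 1
  | _ => 0

theorem rank_eq_zero_iff {q : PnQ n} : q.rank = 0 ↔ q = .inl 0 := by
  rcases q with k | _
  · simp only [rank, Sum.inl.injEq, Fin.ext_iff, Fin.val_zero]
  · simp [rank]

end PnQ

namespace PnBr

variable {n : ℕ} {q q' : PnQ n} {m : PnM n}

theorem rank_le (h : PnBr n q m q') : q.rank ≤ q'.rank := by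
  rcases q with k | j | u <;> rcases m with _ | i <;> simp only [PnBr] at h <;> grind [PnQ.rank]

theorem level_le (h : PnBr n q m q') : q'.level ≤ q.level := by
  rcases q with k | j | u <;> rcases m with _ | i <;> simp only [PnBr] at h <;> grind [PnQ.level]

theorem even_rank (h : PnBr n q m q') (he : Even q.rank) : Even q'.rank := by
  rcases q with k | j | u <;> rcases m with _ | i <;> simp only [PnBr] at h <;> grind [PnQ.rank]

theorem eq_inl_zero_of_none (h : PnBr n q none q') : q = .inl 0 := by
  rcases q with k | j | u <;> simp only [PnBr] at h
  simp [Fin.ext_iff, h.1]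

theorem rank_of_some {i : Fin n} (h : PnBr n q (some i) q') :
    q.rank = 2 * i + 1 ∧ q'.rank = 2 * i + 2 := by
  rcases q with k | j | u <;> simp only [PnBr] at h
  grind [PnQ.rank]

end PnBr

namespace PnRcv

variable {n : ℕ} {q q' : PnQ n} {m : PnM n}

theorem rank_le (h : PnRcv n q m q') : q.rank ≤ q'.rank := by
  rcases q with k | j | u <;> rcases m with _ | i <;> simp only [PnRcv] at h <;> grind [PnQ.rank]

theorem eq_none_of_even_rank (h : PnRcv n q m q') (he : Even q.rank) (he' : ¬ Even q'.rank) :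
    m = none := by
  rcases q with k | j | u <;> rcases m with _ | i <;> simp only [PnRcv] at h <;> grind [PnQ.rank]

theorem not_some_inl_zero {i : Fin n} : ¬ PnRcv n q (some i) (.inl 0) := by
  rcases q with k | j | u <;> simp [PnRcv, eq_comm]

theorem exists_of_level_lt (h : PnRcv n q m q') (hlt : q.level < q'.level) :
    ∃ i : Fin n, m = some i ∧ q.level = i ∧ q'.level = i + 1 := by
  rcases q with k | j | u <;> rcases m with _ | i <;> simp only [PnRcv] at h <;> grind [PnQ.level]

end PnRcv


namespace LExec

variable {n : ℕ} {ν : Type} [Fintype ν] [DecidableEq ν] {r : ℕ} (ρ : LExec (PnProt n) ν r)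

theorem lab_zero (v : ν) : ρ.lab 0 v = .inl 0 :=
  Finset.mem_singleton.mp (ρ.init v)

theorem rank_lab_monotone (v : ν) : Monotone fun t => (ρ.lab t v).rank :=
  ρ.monotone_comp_lab PnQ.rank (fun _ _ _ => PnBr.rank_le) (fun _ _ _ => PnRcv.rank_le) v

theorem lab_ne_inl_zero_of_adj_sender {tj : Fin r} {j : Fin n} {x : ν} {t : Fin (r + 1)}
    (hl : ρ.lost tj = false) (hm : ρ.msg tj = some j) (hE : ρ.E (ρ.sender tj) x)
    (ht : tj.succ ≤ t) : ρ.lab t x ≠ .inl 0 := by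
  intro h0
  have hsucc : ρ.lab tj.succ x = .inl 0 := by
    rw [← PnQ.rank_eq_zero_iff] at h0 ⊢
    exact Nat.eq_zero_of_le_zero (h0 ▸ ρ.rank_lab_monotone x ht)
  have hr := ρ.rcv_of_adj hl hE
  rw [hm, hsucc] at hr
  exact PnRcv.not_some_inl_zero hr

theorem exists_adj_zero_of_even_rank {T T' : Fin (r + 1)} {v : ν} (hle : T ≤ T')
    (hT : Even (ρ.lab T v).rank) (hT' : ¬ Even (ρ.lab T' v).rank) :
    ∃ t : Fin r, T ≤ t.castSucc ∧ ρ.E (ρ.sender t) v ∧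
      ρ.lab t.castSucc (ρ.sender t) = .inl 0 := by
  obtain ⟨t, hTt, he, he', hb | ⟨-, hE, hr⟩⟩ :=
    ρ.exists_step_of_not (fun q => Even q.rank) hle hT hT'
  · exact absurd (PnBr.even_rank hb he) he'
  · have hb := ρ.step_br t
    rw [PnRcv.eq_none_of_even_rank hr he he'] at hb
    exact ⟨t, hTt, hE, PnBr.eq_inl_zero_of_none hb⟩

theorem exists_rcv_of_lt_level {T : Fin (r + 1)} {w : ν} {j : Fin n}
    (hj : (j : ℕ) < (ρ.lab T w).level) :
    ∃ t : Fin r, ρ.lost t = false ∧ ρ.msg t = some j ∧ ρ.E (ρ.sender t) w := by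
  obtain ⟨t, -, hle, hlt, hb | ⟨hl, hE, hr⟩⟩ :=
    ρ.exists_step_of_not (fun q => q.level ≤ j) (Fin.zero_le T)
      (by rw [ρ.lab_zero]; exact Nat.zero_le _) (not_le.mpr hj)
  · exact absurd (le_trans (PnBr.level_le hb) hle) hlt
  · obtain ⟨i, hm, hi, hi'⟩ := PnRcv.exists_of_level_lt hr (by omega)
    obtain rfl : i = j := Fin.ext (by omega)
    exact ⟨t, hl, hm, hE⟩

theorem eq_of_sender_eq {tj tk : Fin r} {j k : Fin n} (hlj : ρ.lost tj = false)
    (hlk : ρ.lost tk = false) (hmj : ρ.msg tj = some j) (hmk : ρ.msg tk = some k)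
    (hs : ρ.sender tj = ρ.sender tk) : j = k := by
  by_contra hne
  wlog hlt : j < k generalizing tj tk j k
  · exact this hlk hlj hmk hmj hs.symm (Ne.symm hne) ((not_lt.mp hlt).lt_of_ne (Ne.symm hne))
  obtain ⟨hj, hj'⟩ := PnBr.rank_of_some (hmj ▸ ρ.step_br tj)
  obtain ⟨hk, -⟩ := PnBr.rank_of_some (hmk ▸ ρ.step_br tk)
  rw [← hs] at hk
  have horder : tj.succ ≤ tk.castSucc := by
    refine Fin.succ_le_castSucc_iff.mpr (Fin.castSucc_lt_castSucc_iff.mp ?_)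
    exact (ρ.rank_lab_monotone (ρ.sender tj)).reflect_lt (by omega)
  obtain ⟨t, ht, hE, h0⟩ := ρ.exists_adj_zero_of_even_rank horder
    (by rw [hj']; exact ⟨j + 1, by ring⟩)
    (by rw [hk, Nat.not_even_iff_odd]; exact odd_two_mul_add_one _)
  exact ρ.lab_ne_inl_zero_of_adj_sender hlj hmj (ρ.E_symm hE) ht h0

end LExec

/-- **Succinctness of reconfigurable semantics, lower bound for lossy executions.**
For every `n ≥ 1`, every lossy execution of `P_n` covering `{☺}` has at least
`n + 1` nodes. -/
theorem lossy_cover_needs_linearly_many_nodes (n : ℕ) (hn : 1 ≤ n)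
    (ν : Type) [Fintype ν] [DecidableEq ν] (r : ℕ) (ρ : LExec (PnProt n) ν r)
    (h : ρ.Covers {PnSmiley n hn}) :
    n + 1 ≤ Fintype.card ν := by
  obtain ⟨w, hw⟩ := h
  have hlevel : (ρ.lab (Fin.last r) w).level = n := by
    rw [show ρ.lab (Fin.last r) w = PnSmiley n hn from hw]
    exact Nat.sub_add_cancel hn
  choose t hl hm hE using
    fun j : Fin n => ρ.exists_rcv_of_lt_level (by rw [hlevel]; exact j.isLt)
  let senders : Fin n ↪ ν :=
    ⟨fun j => ρ.sender (t j), fun j k hs => ρ.eq_of_sender_eq (hl j) (hl k) (hm j) (hm k) hs⟩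
  have hw : w ∉ Set.range senders := by
    rintro ⟨j, hj⟩
    exact ρ.ne_of_adj (hE j) hj
  simpa using Fintype.card_le_of_embedding (senders.optionElim w hw)
end

section
/- Static non-coverability versus reconfigurable coverability for the example protocol: for the broadcast protocol B_ex, no static execution covers {☺}, but there exists a reconfigurable execution (with 3 nodes) covering {☺}. -/
section Execs
variable {Q M : Type} [Fintype Q] [DecidableEq Q] [Fintype M]

/-- A static execution of length `r` over the finite node type `ν`: the communication
topology `E` is fixed throughout and every broadcast reaches all neighbours. -/
structure SExec (P : BroadcastProtocol Q M) (ν : Type) [Fintype ν] [DecidableEq ν]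
    (r : ℕ) where
  lab : Fin (r + 1) → ν → Q
  E : ν → ν → Prop
  E_symm : Symmetric E
  E_irrefl : Irreflexive E
  sender : Fin r → ν
  msg : Fin r → M
  init : ∀ v, lab 0 v ∈ P.I
  step_br : ∀ i : Fin r, P.br (lab i.castSucc (sender i)) (msg i) (lab i.succ (sender i))
  step_rcv : ∀ i : Fin r, ∀ v, v ≠ sender i →
    (E (sender i) v → P.rcv (lab i.castSucc v) (msg i) (lab i.succ v)) ∧
    (¬ E (sender i) v → lab i.succ v = lab i.castSucc v)

namespace SExec

variable {P : BroadcastProtocol Q M} {ν : Type} [Fintype ν] [DecidableEq ν] {r : ℕ}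

/-- Labelling of the last configuration. -/
def lastLab (ρ : SExec P ν r) : ν → Q := ρ.lab (Fin.last r)

/-- The execution covers `F` if a node of the last configuration is labelled in `F`. -/
def Covers (ρ : SExec P ν r) (F : Set Q) : Prop := ∃ v, ρ.lastLab v ∈ F

end SExec

end Execs
/- ## The example protocol B_ex -/

inductive ExQ : Type
  | q0 | q1 | q2 | q3 | q4 | r1 | bot | smiley
  deriving DecidableEq

instance : Fintype ExQ :=
  ⟨{.q0, .q1, .q2, .q3, .q4, .r1, .bot, .smiley}, by intro x; cases x <;> first | decide | simp⟩

inductive ExM : Type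
  | a | b1 | b2
  deriving DecidableEq

instance : Fintype ExM :=
  ⟨{.a, .b1, .b2}, by intro x; cases x <;> first | decide | simp⟩

def ExBr : ExQ → ExM → ExQ → Prop
  | .q0, .a, .q0 => True
  | .q1, .b1, .q2 => True
  | .q3, .b2, .q4 => True
  | _, _, _ => False

def ExRcv : ExQ → ExM → ExQ → Prop
  | .q0, .a, q' => q' = .q1
  | .q2, .a, q' => q' = .q3
  | .q0, .b1, q' => q' = .r1 ∨ q' = .bot
  | .q0, .b2, q' => q' = .bot
  | .r1, .b2, q' => q' = .smiley
  | q, _, q' => q' = q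

def ExProt : BroadcastProtocol ExQ ExM where
  I := {ExQ.q0}
  br := ExBr
  rcv := ExRcv
  complete := by
    intro q m
    cases q <;> cases m <;> first
      | exact ⟨_, rfl⟩
      | exact ⟨_, Or.inl rfl⟩

/-!
A node can reach `smiley` only by receiving `b2` in `r1` from a neighbour `w` in `q3`. Now `w`
reached `q3` by receiving `a` in `q2` from a neighbour `u` in `q0`, and it reached `q2` earlier
by broadcasting `b1`. In a static topology `u` was already a neighbour of `w` then, so it
received `b1` and left `q0`, a state that can never be re-entered. With reconfiguration, `u`
is disconnected from `w` while `w` broadcasts `b1` to a third node, which moves to `r1` and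
later receives `b2`.
-/

theorem Fin.exists_step_between {r : ℕ} {p : Fin (r + 1) → Prop} {s t : Fin (r + 1)}
    (hs : ¬ p s) (hst : s ≤ t) (ht : p t) :
    ∃ i : Fin r, s ≤ i.castSucc ∧ i.succ ≤ t ∧ ¬ p i.castSucc ∧ p i.succ := by
  induction t using Fin.induction with
  | zero => exact absurd (le_antisymm hst (Fin.zero_le s) ▸ ht) hs
  | succ k ih =>
    obtain rfl | hsk := eq_or_lt_of_le hst
    · exact absurd ht hs
    have hsk : s ≤ k.castSucc := Fin.le_castSucc_iff.mpr hsk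
    by_cases hk : p k.castSucc
    · obtain ⟨i, hsi, hik, hi⟩ := ih hsk hk
      exact ⟨i, hsi, hik.trans (Fin.castSucc_le_succ k), hi⟩
    · exact ⟨k, hsk, le_rfl, hk, ht⟩

namespace SExec

variable {Q M : Type} [Fintype Q] [DecidableEq Q] [Fintype M] {P : BroadcastProtocol Q M}
  {ν : Type} [Fintype ν] [DecidableEq ν] {r : ℕ} (ρ : SExec P ν r)

theorem step_cases (i : Fin r) (v : ν) :
    ρ.lab i.succ v = ρ.lab i.castSucc v ∨
    (v = ρ.sender i ∧ P.br (ρ.lab i.castSucc v) (ρ.msg i) (ρ.lab i.succ v)) ∨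
    (v ≠ ρ.sender i ∧ ρ.E (ρ.sender i) v ∧
      P.rcv (ρ.lab i.castSucc v) (ρ.msg i) (ρ.lab i.succ v)) := by
  by_cases hv : v = ρ.sender i
  · exact Or.inr (Or.inl ⟨hv, hv ▸ ρ.step_br i⟩)
  obtain ⟨hrcv, hidle⟩ := ρ.step_rcv i v hv
  by_cases hE : ρ.E (ρ.sender i) v
  · exact Or.inr (Or.inr ⟨hv, hE, hrcv hE⟩)
  · exact Or.inl (hidle hE)

theorem exists_step_enter {S : Set Q} {v : ν} {s t : Fin (r + 1)}
    (hs : ρ.lab s v ∉ S) (hst : s ≤ t) (ht : ρ.lab t v ∈ S) :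
    ∃ i : Fin r, s ≤ i.castSucc ∧ i.succ ≤ t ∧
      ρ.lab i.castSucc v ∉ S ∧ ρ.lab i.succ v ∈ S ∧
      ((v = ρ.sender i ∧ P.br (ρ.lab i.castSucc v) (ρ.msg i) (ρ.lab i.succ v)) ∨
        (v ≠ ρ.sender i ∧ ρ.E (ρ.sender i) v ∧
          P.rcv (ρ.lab i.castSucc v) (ρ.msg i) (ρ.lab i.succ v))) := by
  obtain ⟨i, hsi, hit, hout, hin⟩ := Fin.exists_step_between (p := (ρ.lab · v ∈ S)) hs hst ht
  exact ⟨i, hsi, hit, hout, hin, (ρ.step_cases i v).resolve_left fun hidle => hout (hidle ▸ hin)⟩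

theorem lab_mem_of_le {S : Set Q} (hS : ∀ q ∈ S, ∀ m q', P.br q m q' ∨ P.rcv q m q' → q' ∈ S)
    {v : ν} {s t : Fin (r + 1)} (hs : ρ.lab s v ∈ S) (hst : s ≤ t) : ρ.lab t v ∈ S := by
  by_contra ht
  obtain ⟨i, -, -, hin, hout, hstep⟩ :=
    ρ.exists_step_enter (S := Sᶜ) (not_not_intro hs) hst ht
  exact hout <| hS _ (not_not.mp hin) _ _ <| hstep.imp (·.2) (·.2.2)

end SExec

instance (q : ExQ) (m : ExM) (q' : ExQ) : Decidable (ExBr q m q') := by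
  unfold ExBr; split <;> infer_instance

instance (q : ExQ) (m : ExM) (q' : ExQ) : Decidable (ExRcv q m q') := by
  unfold ExRcv; split <;> infer_instance

theorem exBr_ne_smiley : ∀ q m, ¬ ExBr q m .smiley := by decide
theorem exRcv_smiley : ∀ q m, q ≠ .smiley → ExRcv q m .smiley → m = .b2 := by decide
theorem exBr_b2 : ∀ q q', ExBr q .b2 q' → q = .q3 := by decide
theorem exBr_ne_q3 : ∀ q m, ¬ ExBr q m .q3 := by decide
theorem exRcv_q3 : ∀ q m, q ≠ .q3 → ExRcv q m .q3 → q = .q2 ∧ m = .a := by decide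
theorem exBr_a : ∀ q q', ExBr q .a q' → q = .q0 := by decide
theorem exBr_q2 : ∀ q m, ExBr q m .q2 → m = .b1 := by decide
theorem exRcv_q2 : ∀ q m, ExRcv q m .q2 → q = .q2 := by decide
theorem exRcv_b1_ne_q0 : ∀ q q', ExRcv q .b1 q' → q' ≠ .q0 := by decide
theorem exStep_preserves_ne_q0 : ∀ q, q ≠ .q0 → ∀ m q', ExBr q m q' ∨ ExRcv q m q' → q' ≠ .q0 := by
  decide

namespace SExec

variable {ν : Type} [Fintype ν] [DecidableEq ν] {r : ℕ} (ρ : SExec ExProt ν r)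

theorem lab_zero_eq_q0 (v : ν) : ρ.lab 0 v = .q0 := Finset.mem_singleton.mp (ρ.init v)

theorem exists_step_enter_of_ne_q0 {q : ExQ} (hq : q ≠ .q0) {v : ν} {t : Fin (r + 1)}
    (ht : ρ.lab t v = q) :
    ∃ i : Fin r, i.succ ≤ t ∧ ρ.lab i.castSucc v ≠ q ∧ ρ.lab i.succ v = q ∧
      ((v = ρ.sender i ∧ ExBr (ρ.lab i.castSucc v) (ρ.msg i) q) ∨
        (v ≠ ρ.sender i ∧ ρ.E (ρ.sender i) v ∧ ExRcv (ρ.lab i.castSucc v) (ρ.msg i) q)) := by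
  obtain ⟨i, -, hit, hout, hin, hstep⟩ := ρ.exists_step_enter (S := {q})
    (by simpa [lab_zero_eq_q0] using hq.symm) (Fin.zero_le t) ht
  rw [Set.mem_singleton_iff] at hin
  exact ⟨i, hit, hout, hin, hin ▸ hstep⟩

theorem exists_sender_q3_of_smiley {v : ν} {t : Fin (r + 1)} (ht : ρ.lab t v = .smiley) :
    ∃ j : Fin r, j.succ ≤ t ∧ ρ.lab j.castSucc (ρ.sender j) = .q3 := by
  obtain ⟨j, hjt, hout, -, ⟨-, hbr⟩ | ⟨-, -, hrcv⟩⟩ := ρ.exists_step_enter_of_ne_q0 (by decide) ht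
  · exact absurd hbr (exBr_ne_smiley _ _)
  · have hb2 : ρ.msg j = .b2 := exRcv_smiley _ _ hout hrcv
    exact ⟨j, hjt, exBr_b2 _ _ (hb2 ▸ ρ.step_br j)⟩

theorem exists_receive_a_of_q3 {w : ν} {t : Fin (r + 1)} (ht : ρ.lab t w = .q3) :
    ∃ i : Fin r, i.succ ≤ t ∧ w ≠ ρ.sender i ∧ ρ.E (ρ.sender i) w ∧
      ρ.lab i.castSucc w = .q2 ∧ ρ.lab i.castSucc (ρ.sender i) = .q0 := by
  obtain ⟨i, hit, hout, -, ⟨-, hbr⟩ | ⟨hw, hE, hrcv⟩⟩ := ρ.exists_step_enter_of_ne_q0 (by decide) ht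
  · exact absurd hbr (exBr_ne_q3 _ _)
  · obtain ⟨hq2, ha⟩ := exRcv_q3 _ _ hout hrcv
    exact ⟨i, hit, hw, hE, hq2, exBr_a _ _ (ha ▸ ρ.step_br i)⟩

theorem exists_broadcast_b1_of_q2 {w : ν} {t : Fin (r + 1)} (ht : ρ.lab t w = .q2) :
    ∃ i : Fin r, i.succ ≤ t ∧ ρ.sender i = w ∧ ρ.msg i = .b1 := by
  obtain ⟨i, hit, hout, -, ⟨hw, hbr⟩ | ⟨-, -, hrcv⟩⟩ := ρ.exists_step_enter_of_ne_q0 (by decide) ht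
  · exact ⟨i, hit, hw.symm, exBr_q2 _ _ hbr⟩
  · exact absurd (exRcv_q2 _ _ hrcv) hout

theorem lab_ne_q0_of_receive_b1 {i : Fin r} {u : ν} (hu : u ≠ ρ.sender i)
    (hE : ρ.E (ρ.sender i) u) (hb1 : ρ.msg i = .b1) {t : Fin (r + 1)} (hit : i.succ ≤ t) :
    ρ.lab t u ≠ .q0 := by
  have hleft : ρ.lab i.succ u ≠ .q0 := exRcv_b1_ne_q0 _ _ (hb1 ▸ (ρ.step_rcv i u hu).1 hE)
  exact ρ.lab_mem_of_le (S := {q | q ≠ .q0}) exStep_preserves_ne_q0 hleft hit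

theorem not_covers_smiley : ¬ ρ.Covers {ExQ.smiley} := by
  rintro ⟨v, hv⟩
  obtain ⟨j, -, hq3⟩ := ρ.exists_sender_q3_of_smiley hv
  obtain ⟨i', -, hne, hE, hq2, hq0⟩ := ρ.exists_receive_a_of_q3 hq3
  obtain ⟨i, hi, hsender, hb1⟩ := ρ.exists_broadcast_b1_of_q2 hq2
  rw [← hsender] at hne hE
  exact ρ.lab_ne_q0_of_receive_b1 hne.symm (ρ.E_symm hE) hb1 hi hq0

end SExec

def witnessExec : RExec ExProt (Fin 3) 4 where
  lab := ![![.q0, .q0, .q0], ![.q0, .q1, .q0], ![.q0, .q2, .r1], ![.q0, .q3, .r1],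
    ![.q0, .q4, .smiley]]
  edges i := (SimpleGraph.edge (![0, 1, 0, 1, 0] i) (![1, 2, 1, 2, 1] i)).Adj
  edges_symm _ _ _ := SimpleGraph.Adj.symm
  edges_irrefl _ _ := SimpleGraph.irrefl _
  sender := ![0, 1, 0, 1]
  msg := ![.a, .b1, .a, .b2]
  init := by decide
  step_br := by simp only [ExProt]; decide
  step_rcv := by simp only [ExProt, SimpleGraph.edge_adj]; decide

/-- **Static non-coverability versus reconfigurable coverability** for the example
protocol `B_ex`: no static execution covers `{☺}`, but some reconfigurable execution
with 3 nodes does. -/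
theorem static_noncoverable_but_reconfigurable_coverable :
    (∀ (ν : Type) [Fintype ν] [DecidableEq ν] (r : ℕ) (ρ : SExec ExProt ν r),
      ¬ ρ.Covers {ExQ.smiley}) ∧
    (∃ (r : ℕ) (ρ : RExec ExProt (Fin 3) r), ρ.Covers {ExQ.smiley}) :=
  ⟨fun _ _ _ _ ρ => ρ.not_covers_smiley, 4, witnessExec, 2, rfl⟩
end
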